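/- Fix d ≥ 5 and N ≥ 1 and define the sequence d_i = 2 for i ≤ N and d_i = 5 for i > N. Then the limiting composition lim_{n→∞} |F_{d_1}|∘…∘|F_{d_n}|(x) for x ∈ (0,1] equals (1/3^N)·x₅, where x₅ ∈ (0,1] is the unique positive solution of |F_5(x₅)| = x₅; in particular the Cesàro mean of ln((d_i−1)/3) equals ln(4/3) > 0 while the limit value tends to 0 as N → ∞. -/

import Mathlib

/-!
Both transfer functions involved are explicit rational functions: writing
`coth (n artanh t) = ((1+t)^n + (1-t)^n) / ((1+t)^n - (1-t)^n)` gives `|F 2 t| = t / 3` and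
`|F 5 t| = g5 t := 4t(3t² + 5) / (3(t⁴ + 10t² + 5))` on `(0, 1)`. Hence the first `N` levels
only contribute the factor `3⁻ᴺ`, while the deeper levels iterate `g5`. On `[0, 1]` the map `g5`
is increasing and `g5 t - t` has the sign of `5 - 3t⁴ - 18t²`, so every orbit in `(0, 1]` is
monotone and converges to the unique positive root `x₅` of `3t⁴ + 18t² = 5`.
-/

/-- Hyperbolic cotangent. -/
noncomputable def coth (x : ℝ) : ℝ := Real.cosh x / Real.sinh x

/-- Inverse hyperbolic tangent. -/
noncomputable def artanh (x : ℝ) : ℝ := (1 / 2) * Real.log ((1 + x) / (1 - x))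

/-- The AKLT single-site transfer function `F_d`, extended by `F_d 0 = 0`. -/
noncomputable def F (D t : ℝ) : ℝ :=
  if t = 0 then 0 else -(1 / (D + 1)) * (D * coth (D * artanh t) - 1 / t)

/-- `compF d n x = |F (d 0)| ∘ |F (d 1)| ∘ ⋯ ∘ |F (d (n-1))| $ x`, the composition of the
absolute transfer functions along the first `n` levels of a radial tree with degree
sequence `d` (level `i` has degree `d i`, and `F (d (n-1))` is applied first). -/
noncomputable def compF (d : ℕ → ℝ) : ℕ → ℝ → ℝ
  | 0, x => x
  | n + 1, x => compF d n (|F (d n) x|)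

open Set Filter Topology Function

theorem Set.EqOn.iterate {α : Type*} {f g : α → α} {s : Set α} (h : EqOn f g s)
    (hg : MapsTo g s s) (n : ℕ) : EqOn f^[n] g^[n] s := by
  induction n with
  | zero => exact fun _ _ => rfl
  | succ n ih => intro x hx; rw [iterate_succ_apply, iterate_succ_apply, h hx, ih (hg hx)]

theorem isFixedPt_of_tendsto_iterate_of_mapsTo {α : Type*} [TopologicalSpace α] [T2Space α]
    {f : α → α} {s : Set α} {x y : α} (hy : Tendsto (fun n => f^[n] x) atTop (𝓝 y))
    (hs : IsClosed s) (hf : ContinuousOn f s) (hmaps : MapsTo f s s) (hx : x ∈ s) :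
    y ∈ s ∧ IsFixedPt f y := by
  have hmem : ∀ n, f^[n] x ∈ s := fun n => hmaps.iterate n hx
  have hys : y ∈ s := hs.mem_of_tendsto hy (Eventually.of_forall hmem)
  refine ⟨hys, tendsto_nhds_unique ?_ ((tendsto_add_atTop_iff_nat 1).2 hy)⟩
  simp only [iterate_succ_apply']
  exact (hf y hys).tendsto.comp (tendsto_nhdsWithin_iff.2 ⟨hy, Eventually.of_forall hmem⟩)

section MonotoneOrbit

variable {α : Type*} [ConditionallyCompleteLinearOrder α] [TopologicalSpace α] [OrderTopology α]
  {f : α → α} {a b x : α}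

theorem tendsto_iterate_of_le_map (hf : ContinuousOn f (Icc a b))
    (hmaps : MapsTo f (Icc a b) (Icc a b)) (hle : ∀ y ∈ Icc a b, y ≤ f y)
    (hfix : ∀ y ∈ Icc a b, f y = y → y = b) (hx : x ∈ Icc a b) :
    Tendsto (fun n => f^[n] x) atTop (𝓝 b) := by
  have hmem : ∀ n, f^[n] x ∈ Icc a b := fun n => hmaps.iterate n hx
  have hmono : Monotone fun n => f^[n] x := monotone_nat_of_le_succ fun n => by
    rw [iterate_succ_apply']; exact hle _ (hmem n)
  have hlim := tendsto_atTop_ciSup hmono ⟨b, by rintro _ ⟨n, rfl⟩; exact (hmem n).2⟩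
  obtain ⟨hL, hfixL⟩ := isFixedPt_of_tendsto_iterate_of_mapsTo hlim isClosed_Icc hf hmaps hx
  rwa [hfix _ hL hfixL] at hlim

theorem tendsto_iterate_of_map_le (hf : ContinuousOn f (Icc a b))
    (hmaps : MapsTo f (Icc a b) (Icc a b)) (hle : ∀ y ∈ Icc a b, f y ≤ y)
    (hfix : ∀ y ∈ Icc a b, f y = y → y = a) (hx : x ∈ Icc a b) :
    Tendsto (fun n => f^[n] x) atTop (𝓝 a) :=
  tendsto_iterate_of_le_map (α := αᵒᵈ) (a := OrderDual.toDual b) (b := OrderDual.toDual a)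
    (by rw [Icc_toDual]; exact hf) (by rw [Icc_toDual]; exact hmaps)
    (by rw [Icc_toDual]; exact hle) (by rw [Icc_toDual]; exact hfix) (by rw [Icc_toDual]; exact hx)

end MonotoneOrbit

theorem coth_eq_exp (y : ℝ) : coth y = (Real.exp (2 * y) + 1) / (Real.exp (2 * y) - 1) := by
  have hy : Real.exp (2 * y) = Real.exp y * Real.exp y := by rw [← Real.exp_add, two_mul]
  rw [coth, Real.cosh_eq, Real.sinh_eq, hy, Real.exp_neg,
    ← mul_div_mul_left _ _ (mul_ne_zero two_ne_zero (Real.exp_pos y).ne')]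
  congr 1 <;> field_simp

theorem exp_two_mul_artanh {t : ℝ} (h₀ : -1 < t) (h₁ : t < 1) :
    Real.exp (2 * artanh t) = (1 + t) / (1 - t) := by
  rw [artanh, ← mul_assoc, mul_one_div_cancel two_ne_zero, one_mul,
    Real.exp_log (div_pos (by linarith) (by linarith))]

theorem coth_natCast_mul_artanh (n : ℕ) {t : ℝ} (h₀ : -1 < t) (h₁ : t < 1) :
    coth (n * artanh t) = ((1 + t) ^ n + (1 - t) ^ n) / ((1 + t) ^ n - (1 - t) ^ n) := by
  have hq : (1 - t) ^ n ≠ 0 := pow_ne_zero _ (by linarith)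
  rw [coth_eq_exp, mul_left_comm, Real.exp_nat_mul, exp_two_mul_artanh h₀ h₁, div_pow,
    div_add_one hq, div_sub_one hq, div_div_div_cancel_right₀ hq]

theorem F_natCast_eq (n : ℕ) {t : ℝ} (h₀ : -1 < t) (h₁ : t < 1) (ht : t ≠ 0) :
    F n t = -(1 / (n + 1)) *
      (n * (((1 + t) ^ n + (1 - t) ^ n) / ((1 + t) ^ n - (1 - t) ^ n)) - 1 / t) := by
  rw [F, if_neg ht, coth_natCast_mul_artanh n h₀ h₁]

/-- At `t = 1` the junk values `log 0 = 0` and `1 / sinh 0 = 0` make `coth (D * artanh 1) = 0`. -/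
theorem F_one (D : ℝ) : F D 1 = 1 / (D + 1) := by
  simp [F, artanh, coth]

theorem F_two {t : ℝ} (h₀ : -1 < t) (h₁ : t < 1) : F 2 t = -(t / 3) := by
  rcases eq_or_ne t 0 with rfl | ht
  · simp [F]
  have h := F_natCast_eq 2 h₀ h₁ ht
  push_cast at h
  rw [h, show (1 + t) ^ 2 - (1 - t) ^ 2 = 4 * t by ring]
  field_simp
  ring

theorem abs_F_two {t : ℝ} (h₀ : 0 ≤ t) (h₁ : t ≤ 1) : |F 2 t| = t / 3 := by
  rcases h₁.lt_or_eq with h₁ | rfl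
  · rw [F_two (by linarith) h₁, abs_neg, abs_of_nonneg (by positivity)]
  · norm_num [F_one]

noncomputable def g5 (t : ℝ) : ℝ := 4 * t * (3 * t ^ 2 + 5) / (3 * (t ^ 4 + 10 * t ^ 2 + 5))

theorem F_five {t : ℝ} (h₀ : -1 < t) (h₁ : t < 1) : F 5 t = -g5 t := by
  rcases eq_or_ne t 0 with rfl | ht
  · simp [F, g5]
  have h := F_natCast_eq 5 h₀ h₁ ht
  push_cast at h
  have hpos : 0 < t ^ 4 + 10 * t ^ 2 + 5 := by positivity
  rw [h, g5, show (1 + t) ^ 5 - (1 - t) ^ 5 = 2 * t * (t ^ 4 + 10 * t ^ 2 + 5) by ring]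
  field_simp
  ring

theorem g5_nonneg {t : ℝ} (ht : 0 ≤ t) : 0 ≤ g5 t := by
  unfold g5; positivity

theorem g5_pos {t : ℝ} (ht : 0 < t) : 0 < g5 t := by
  unfold g5; positivity

theorem abs_F_five {t : ℝ} (h₀ : 0 ≤ t) (h₁ : t < 1) : |F 5 t| = g5 t := by
  rw [F_five (by linarith) h₁, abs_neg, abs_of_nonneg (g5_nonneg h₀)]

theorem continuous_g5 : Continuous g5 :=
  Continuous.div (by fun_prop) (by fun_prop) fun t => by positivity

theorem g5_monotoneOn : MonotoneOn g5 (Icc 0 1) := by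
  rintro a ⟨ha, ha1⟩ b ⟨hb, hb1⟩ hab
  rw [g5, g5, div_le_div_iff₀ (by positivity) (by positivity)]
  have hab0 : 0 ≤ a * b := mul_nonneg ha hb
  have hab1 : a * b ≤ 1 := by nlinarith
  have t1 : 0 ≤ a * b * (1 - a ^ 2 * b ^ 2) := mul_nonneg hab0 (by nlinarith)
  have t2 : 0 ≤ a * b * (1 - a ^ 2) := mul_nonneg hab0 (by nlinarith)
  have t3 : 0 ≤ a * b * (1 - b ^ 2) := mul_nonneg hab0 (by nlinarith)
  -- up to the factor `12`, this is the cross-multiplied numerator of `g5 b - g5 a`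
  have key : 0 ≤ (b - a) * (-3 * a ^ 3 * b ^ 3 - 5 * a ^ 3 * b - 5 * a * b ^ 3
      + 25 * a ^ 2 * b ^ 2 + 15 * a ^ 2 + 15 * b ^ 2 - 35 * a * b + 25) :=
    mul_nonneg (by linarith) (by nlinarith [sq_nonneg (a - b), sq_nonneg (a * b)])
  nlinarith [key]

theorem g5_lt_one {t : ℝ} (h₀ : 0 ≤ t) (h₁ : t ≤ 1) : g5 t < 1 := by
  have h := g5_monotoneOn ⟨h₀, h₁⟩ ⟨zero_le_one, le_rfl⟩ h₁
  norm_num [g5] at h ⊢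
  linarith

theorem g5_sub_self (t : ℝ) :
    g5 t - t = t * (5 - (3 * t ^ 4 + 18 * t ^ 2)) / (3 * (t ^ 4 + 10 * t ^ 2 + 5)) := by
  have hpos : 0 < t ^ 4 + 10 * t ^ 2 + 5 := by positivity
  rw [g5]
  field_simp
  ring

theorem strictMonoOn_quartic : StrictMonoOn (fun t : ℝ => 3 * t ^ 4 + 18 * t ^ 2) (Ici 0) :=
  fun a ha b _ hab => by
    have h2 := pow_lt_pow_left₀ hab ha (by norm_num : (2 : ℕ) ≠ 0)
    have h4 := pow_lt_pow_left₀ hab ha (by norm_num : (4 : ℕ) ≠ 0)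
    simp only
    linarith

/-- The positive root of `3t⁴ + 18t² = 5`, solved as a quadratic in `t²`. -/
noncomputable def g5FixedPt : ℝ := √((4 * √6 - 9) / 3)

theorem g5FixedPt_pos_and_quartic :
    0 < g5FixedPt ∧ 3 * g5FixedPt ^ 4 + 18 * g5FixedPt ^ 2 = 5 := by
  have h6 : √6 ^ 2 = 6 := Real.sq_sqrt (by norm_num)
  have hq : 0 < (4 * √6 - 9) / 3 := by nlinarith [Real.sqrt_nonneg 6]
  have hsq : g5FixedPt ^ 2 = (4 * √6 - 9) / 3 := Real.sq_sqrt hq.le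
  refine ⟨Real.sqrt_pos.2 hq, ?_⟩
  rw [show g5FixedPt ^ 4 = (g5FixedPt ^ 2) ^ 2 by ring, hsq]
  nlinarith

theorem g5FixedPt_pos : 0 < g5FixedPt := g5FixedPt_pos_and_quartic.1

theorem quartic_g5FixedPt : 3 * g5FixedPt ^ 4 + 18 * g5FixedPt ^ 2 = 5 :=
  g5FixedPt_pos_and_quartic.2

theorem g5FixedPt_lt_one : g5FixedPt < 1 := by
  by_contra! h1
  linarith [quartic_g5FixedPt, one_le_pow₀ (n := 4) h1, one_le_pow₀ (n := 2) h1]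

theorem g5_g5FixedPt : g5 g5FixedPt = g5FixedPt := by
  rw [← sub_eq_zero, g5_sub_self, quartic_g5FixedPt, sub_self, mul_zero, zero_div]

theorem le_g5_of_le_g5FixedPt {t : ℝ} (h₀ : 0 ≤ t) (ht : t ≤ g5FixedPt) : t ≤ g5 t := by
  have hq := (strictMonoOn_quartic.le_iff_le h₀ g5FixedPt_pos.le).2 ht
  simp only [quartic_g5FixedPt] at hq
  rw [← sub_nonneg, g5_sub_self]
  exact div_nonneg (mul_nonneg h₀ (by linarith)) (by positivity)

theorem g5_le_of_g5FixedPt_le {t : ℝ} (ht : g5FixedPt ≤ t) : g5 t ≤ t := by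
  have h₀ := g5FixedPt_pos.trans_le ht
  have hq := (strictMonoOn_quartic.le_iff_le g5FixedPt_pos.le h₀.le).2 ht
  simp only [quartic_g5FixedPt] at hq
  rw [← sub_nonpos, g5_sub_self]
  exact div_nonpos_of_nonpos_of_nonneg (mul_nonpos_of_nonneg_of_nonpos h₀.le (by linarith))
    (by positivity)

theorem eq_g5FixedPt_of_g5_eq {t : ℝ} (h₀ : 0 < t) (ht : g5 t = t) : t = g5FixedPt := by
  have hpos : 0 < 3 * (t ^ 4 + 10 * t ^ 2 + 5) := by positivity
  rw [← sub_eq_zero, g5_sub_self, div_eq_zero_iff, mul_eq_zero, sub_eq_zero] at ht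
  refine strictMonoOn_quartic.injOn h₀.le g5FixedPt_pos.le ?_
  simp only [quartic_g5FixedPt]
  rcases ht with (h | h) | h <;> [linarith; exact h.symm; linarith]

theorem tendsto_iterate_g5 {x : ℝ} (hx : x ∈ Ioc 0 1) :
    Tendsto (fun n => g5^[n] x) atTop (𝓝 g5FixedPt) := by
  have hp : g5FixedPt ∈ Icc (0 : ℝ) 1 := ⟨g5FixedPt_pos.le, g5FixedPt_lt_one.le⟩
  rcases le_total x g5FixedPt with hxp | hpx
  · refine tendsto_iterate_of_le_map continuous_g5.continuousOn ?_
      (fun y hy => le_g5_of_le_g5FixedPt (hx.1.le.trans hy.1) hy.2)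
      (fun y hy => eq_g5FixedPt_of_g5_eq (hx.1.trans_le hy.1)) ⟨le_rfl, hxp⟩
    intro y ⟨hxy, hyp⟩
    have hy : y ∈ Icc (0 : ℝ) 1 := ⟨hx.1.le.trans hxy, hyp.trans hp.2⟩
    exact ⟨hxy.trans (le_g5_of_le_g5FixedPt hy.1 hyp),
      g5_g5FixedPt ▸ g5_monotoneOn hy hp hyp⟩
  · refine tendsto_iterate_of_map_le continuous_g5.continuousOn ?_
      (fun y hy => g5_le_of_g5FixedPt_le hy.1)
      (fun y hy => eq_g5FixedPt_of_g5_eq (g5FixedPt_pos.trans_le hy.1)) ⟨hpx, le_rfl⟩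
    intro y ⟨hpy, hyx⟩
    exact ⟨g5_g5FixedPt ▸ g5_monotoneOn hp ⟨hp.1.trans hpy, hyx.trans hx.2⟩ hpy,
      (g5_le_of_g5FixedPt_le hpy).trans hyx⟩

theorem abs_F_five_mem_Ioo {t : ℝ} (ht : t ∈ Ioc 0 1) : |F 5 t| ∈ Ioo 0 1 := by
  rcases ht.2.lt_or_eq with h₁ | rfl
  · rw [abs_F_five ht.1.le h₁]
    exact ⟨g5_pos ht.1, g5_lt_one ht.1.le h₁.le⟩
  · norm_num [F_one]

theorem mapsTo_abs_F_five : MapsTo (fun t => |F 5 t|) (Ioc 0 1) (Ioc 0 1) :=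
  fun _ ht => Ioo_subset_Ioc_self (abs_F_five_mem_Ioo ht)

theorem tendsto_iterate_abs_F_five {x : ℝ} (hx : x ∈ Ioc 0 1) :
    Tendsto (fun n => (fun t => |F 5 t|)^[n] x) atTop (𝓝 g5FixedPt) := by
  have hy := abs_F_five_mem_Ioo hx
  have heq : EqOn (fun t => |F 5 t|) g5 (Ico 0 1) := fun t ht => abs_F_five ht.1 ht.2
  have hmaps : MapsTo g5 (Ico 0 1) (Ico 0 1) := fun t ht =>
    ⟨g5_nonneg ht.1, g5_lt_one ht.1 ht.2.le⟩
  -- one step moves the orbit into `(0, 1)`, away from the junk value `F 5 1 = 1 / 6`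
  rw [← tendsto_add_atTop_iff_nat 1]
  simp only [iterate_succ_apply]
  exact (tendsto_iterate_g5 ⟨hy.1, hy.2.le⟩).congr
    fun n => (heq.iterate hmaps n ⟨hy.1.le, hy.2⟩).symm

theorem abs_F_five_eq_self_iff {t : ℝ} (ht : t ∈ Ioc 0 1) : |F 5 t| = t ↔ t = g5FixedPt := by
  rcases ht.2.lt_or_eq with h₁ | rfl
  · rw [abs_F_five ht.1.le h₁]
    exact ⟨eq_g5FixedPt_of_g5_eq ht.1, fun h => h ▸ g5_g5FixedPt⟩
  · constructor
    · norm_num [F_one]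
    · intro h; exact absurd h g5FixedPt_lt_one.ne'

theorem compF_add (d : ℕ → ℝ) (m n : ℕ) (x : ℝ) :
    compF d (m + n) x = compF d m (compF (fun i => d (m + i)) n x) := by
  induction n generalizing x with
  | zero => rfl
  | succ n ih => exact ih _

theorem compF_const (D : ℝ) (n : ℕ) (x : ℝ) :
    compF (fun _ => D) n x = (fun t => |F D t|)^[n] x := by
  induction n generalizing x with
  | zero => rfl
  | succ n ih => rw [iterate_succ_apply]; exact ih _

theorem compF_of_eq_two {d : ℕ → ℝ} {n : ℕ} (hd : ∀ i < n, d i = 2) {x : ℝ}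
    (hx : x ∈ Icc 0 1) : compF d n x = x / 3 ^ n := by
  induction n generalizing x with
  | zero => simp [compF]
  | succ n ih =>
    rw [compF, hd n n.lt_succ_self, abs_F_two hx.1 hx.2,
      ih (fun i hi => hd i (hi.trans n.lt_succ_self)) ⟨by linarith [hx.1], by linarith [hx.2]⟩]
    ring

theorem stmt_16_general (N : ℕ)
    (dseq : ℕ → ℝ) (hdseq : ∀ i, dseq i = if i < N then 2 else 5) :
    (∃! x₅ : ℝ, x₅ ∈ Set.Ioc (0 : ℝ) 1 ∧ |F 5 x₅| = x₅) ∧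
    ∀ x₅ : ℝ, x₅ ∈ Set.Ioc (0 : ℝ) 1 → |F 5 x₅| = x₅ →
      (∀ x ∈ Set.Ioc (0 : ℝ) 1,
        Filter.Tendsto (fun n => compF dseq n x) Filter.atTop
          (nhds ((1 / 3 ^ N) * x₅))) ∧
      Filter.Tendsto
        (fun n : ℕ => (1 / (n : ℝ)) * ∑ i ∈ Finset.range n, Real.log ((dseq i - 1) / 3))
        Filter.atTop (nhds (Real.log (4 / 3))) ∧
      0 < Real.log (4 / 3) ∧
      Filter.Tendsto (fun M : ℕ => (1 / 3 ^ M : ℝ) * x₅) Filter.atTop (nhds 0) := by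
  have hp : g5FixedPt ∈ Ioc (0 : ℝ) 1 := ⟨g5FixedPt_pos, g5FixedPt_lt_one.le⟩
  refine ⟨⟨g5FixedPt, ⟨hp, (abs_F_five_eq_self_iff hp).2 rfl⟩,
    fun y hy => (abs_F_five_eq_self_iff hy.1).1 hy.2⟩, ?_⟩
  rintro x₅ hx₅ hfix
  obtain rfl := (abs_F_five_eq_self_iff hx₅).1 hfix
  refine ⟨fun x hx => ?_, ?_, Real.log_pos (by norm_num), ?_⟩
  · have htail : (fun i => dseq (N + i)) = fun _ => 5 := funext fun i => by simp [hdseq]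
    have hsplit : ∀ m, compF dseq (m + N) x = (fun t => |F 5 t|)^[m] x / 3 ^ N := fun m => by
      rw [add_comm, compF_add, htail, compF_const, compF_of_eq_two
        (fun i hi => by simp [hdseq, hi]) (Ioc_subset_Icc_self (mapsTo_abs_F_five.iterate m hx))]
    rw [← tendsto_add_atTop_iff_nat N, one_div_mul_eq_div]
    simpa only [hsplit] using (tendsto_iterate_abs_F_five hx).div_const (3 ^ N)
  · have hlog : Tendsto (fun i => Real.log ((dseq i - 1) / 3)) atTop (𝓝 (Real.log (4 / 3))) :=
      tendsto_const_nhds.congr' <| (eventually_ge_atTop N).mono fun i hi => by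
        norm_num [hdseq, hi.not_gt]
    simpa only [one_div] using hlog.cesaro
  · have hpow : Tendsto (fun M : ℕ => (1 / 3 : ℝ) ^ M) atTop (𝓝 0) :=
      tendsto_pow_atTop_nhds_zero_of_lt_one (by norm_num) (by norm_num)
    simpa only [one_div_pow, zero_mul] using hpow.mul_const g5FixedPt

theorem stmt_16 (N : ℕ) (hN : 1 ≤ N)
    (dseq : ℕ → ℝ) (hdseq : ∀ i, dseq i = if i < N then 2 else 5) :
    (∃! x₅ : ℝ, x₅ ∈ Set.Ioc (0 : ℝ) 1 ∧ |F 5 x₅| = x₅) ∧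
    ∀ x₅ : ℝ, x₅ ∈ Set.Ioc (0 : ℝ) 1 → |F 5 x₅| = x₅ →
      (∀ x ∈ Set.Ioc (0 : ℝ) 1,
        Filter.Tendsto (fun n => compF dseq n x) Filter.atTop
          (nhds ((1 / 3 ^ N) * x₅))) ∧
      Filter.Tendsto
        (fun n : ℕ => (1 / (n : ℝ)) * ∑ i ∈ Finset.range n, Real.log ((dseq i - 1) / 3))
        Filter.atTop (nhds (Real.log (4 / 3))) ∧
      0 < Real.log (4 / 3) ∧
      Filter.Tendsto (fun M : ℕ => (1 / 3 ^ M : ℝ) * x₅) Filter.atTop (nhds 0) :=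
  stmt_16_general N dseq hdseq
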